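/- arXiv:1610.00652 — 9 statements merged into one kernel-verified Lean document; each statement's English description precedes it below -/
import Mathlib

section
/- Let n ≥ 2 and let a₁, …, aₙ be positive integers admitting a partition, i.e., there exists a subset I ⊆ {1,…,n} with ∑_{i∈I} aᵢ = ∑_{i∉I} aᵢ. Then the weighted cycle on vertices {1,…,n}, whose edges are {i−1,i} with weight aᵢ for 1 < i ≤ n together with the edge {1,n} with weight a₁, admits a realization on the real line: there exists x : {1,…,n} → ℝ such that |x_{i−1} − x_i| = aᵢ for all 1 < i ≤ n and |x₁ − xₙ| = a₁. -/
/-! Orient each edge by the partition: walk right by `aᵢ` when `i ∈ I` and left otherwise.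
The positions are prefix sums of these signed weights, so consecutive vertices lie at
distance `aᵢ`, and since both halves of the partition have the same sum the walk returns to
its start, which closes the cycle. -/

open Finset

theorem sum_ite_mem_neg {ι G : Type*} [DecidableEq ι] [AddCommGroup G] {S I : Finset ι}
    (hI : I ⊆ S) (f : ι → G) :
    ∑ j ∈ S, (if j ∈ I then f j else -f j) = ∑ j ∈ I, f j - ∑ j ∈ S \ I, f j := by
  rw [sum_ite, filter_mem_eq_inter, inter_eq_right.2 hI, filter_notMem_eq_sdiff,
    sum_neg_distrib, sub_eq_add_neg]

def prefixSum (s : ℕ → ℝ) (k : ℕ) : ℝ := ∑ j ∈ Icc 1 k, s j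

theorem abs_prefixSum_pred_sub (s : ℕ → ℝ) {i : ℕ} (hi : 1 ≤ i) :
    |prefixSum s (i - 1) - prefixSum s i| = |s i| := by
  obtain ⟨k, rfl⟩ : ∃ k, i = k + 1 := ⟨i - 1, by omega⟩
  rw [prefixSum, prefixSum, Nat.add_sub_cancel, sum_Icc_succ_top (by omega), sub_add_cancel_left,
    abs_neg]

/-- Forward direction of Saxe's reduction: a YES instance of Partition yields a
realization of the weighted cycle on the real line. -/
theorem partition_yields_cycle_realization
    (n : ℕ) (hn : 2 ≤ n) (a : ℕ → ℤ)
    (hpos : ∀ i ∈ Finset.Icc 1 n, 0 < a i)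
    (I : Finset ℕ) (hI : I ⊆ Finset.Icc 1 n)
    (hpart : ∑ i ∈ I, a i = ∑ i ∈ Finset.Icc 1 n \ I, a i) :
    ∃ x : ℕ → ℝ,
      (∀ i, 1 < i → i ≤ n → |x (i - 1) - x i| = (a i : ℝ)) ∧
      |x 1 - x n| = (a 1 : ℝ) := by
  set s : ℕ → ℝ := fun j => if j ∈ I then (a j : ℝ) else -a j
  have habs : ∀ i ∈ Icc 1 n, |s i| = a i := fun i hi => by
    have : (0 : ℝ) < a i := Int.cast_pos.2 (hpos i hi)
    simp only [s]
    split_ifs <;> simp [abs_of_pos this]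
  have hclosed : prefixSum s n = 0 := by
    rw [prefixSum, sum_ite_mem_neg hI, sub_eq_zero]
    exact_mod_cast hpart
  refine ⟨prefixSum s, fun i h1 h2 => ?_, ?_⟩
  · rw [abs_prefixSum_pred_sub s h1.le, habs i (mem_Icc.2 ⟨h1.le, h2⟩)]
  · rw [hclosed, sub_zero, prefixSum, Icc_self, sum_singleton,
      habs 1 (mem_Icc.2 ⟨le_rfl, by omega⟩)]
end

section
/- Let n ≥ 2 and let a₁, …, aₙ be positive integers. If there exists x : {1,…,n} → ℝ with |x_{i−1} − x_i| = aᵢ for all 1 < i ≤ n and |x₁ − xₙ| = a₁, then there exists a subset I ⊆ {1,…,n} with ∑_{i∈I} aᵢ = ∑_{i∉I} aᵢ. -/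
/-!
Orient every edge of the cycle by the sign of the displacement `x (i - 1) - x i`. These
displacements have absolute values `aᵢ` and sum to zero around the closed cycle (the predecessor
map permutes the vertices), so the edges of positive and of negative displacement have equal
total weight.
-/

open Finset

theorem Finset.exists_sum_eq_sum_sdiff_of_abs_eq {ι α : Type*} [DecidableEq ι] [AddCommGroup α]
    [LinearOrder α] [IsOrderedAddMonoid α] {s : Finset ι} {d a : ι → α}
    (habs : ∀ i ∈ s, |d i| = a i) (hsum : ∑ i ∈ s, d i = 0) : ∃ I ⊆ s, ∑ i ∈ I, a i = ∑ i ∈ s \ I, a i := by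
  refine ⟨s.filter (0 ≤ d ·), filter_subset _ s, ?_⟩
  have hnonneg : ∑ i ∈ s.filter (0 ≤ d ·), a i = ∑ i ∈ s.filter (0 ≤ d ·), d i :=
    sum_congr rfl fun i hi ↦ by
      obtain ⟨hs, hi⟩ := mem_filter.mp hi
      rw [← habs i hs, abs_of_nonneg hi]
  have hneg : ∑ i ∈ s.filter (¬0 ≤ d ·), a i = -∑ i ∈ s.filter (¬0 ≤ d ·), d i := by
    rw [← sum_neg_distrib]
    refine sum_congr rfl fun i hi ↦ ?_
    obtain ⟨hs, hi⟩ := mem_filter.mp hi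
    rw [← habs i hs, abs_of_neg (not_le.mp hi)]
  rw [← filter_not, hnonneg, hneg, eq_neg_iff_add_eq_zero, sum_filter_add_sum_filter_not, hsum]

def cyclePred (n i : ℕ) : ℕ := if i = 1 then n else i - 1

def cycleSucc (n i : ℕ) : ℕ := if i = n then 1 else i + 1

theorem sum_comp_cyclePred {M : Type*} [AddCommMonoid M] (n : ℕ) (f : ℕ → M) :
    ∑ i ∈ Icc 1 n, f (cyclePred n i) = ∑ i ∈ Icc 1 n, f i :=
  sum_nbij' (cyclePred n) (cycleSucc n)
    (fun i hi ↦ by simp only [mem_Icc, cyclePred] at hi ⊢; split_ifs <;> omega)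
    (fun i hi ↦ by simp only [mem_Icc, cycleSucc] at hi ⊢; split_ifs <;> omega)
    (fun i hi ↦ by simp only [mem_Icc, cyclePred, cycleSucc] at hi ⊢; split_ifs <;> omega)
    (fun i hi ↦ by simp only [mem_Icc, cyclePred, cycleSucc] at hi ⊢; split_ifs <;> omega)
    (fun _ _ ↦ rfl)

theorem sum_sub_cyclePred {G : Type*} [AddCommGroup G] (n : ℕ) (x : ℕ → G) :
    ∑ i ∈ Icc 1 n, (x (cyclePred n i) - x i) = 0 := by
  rw [sum_sub_distrib, sum_comp_cyclePred, sub_self]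

theorem cycle_realization_yields_partition_general
    (n : ℕ) (a : ℕ → ℤ)
    (x : ℕ → ℝ)
    (hx : ∀ i, 1 < i → i ≤ n → |x (i - 1) - x i| = (a i : ℝ))
    (hx1n : |x 1 - x n| = (a 1 : ℝ)) :
    ∃ I : Finset ℕ, I ⊆ Finset.Icc 1 n ∧
      ∑ i ∈ I, a i = ∑ i ∈ Finset.Icc 1 n \ I, a i := by
  have habs : ∀ i ∈ Icc 1 n, |x (cyclePred n i) - x i| = (a i : ℝ) := by
    intro i hi
    rcases eq_or_ne i 1 with rfl | h1
    · rw [cyclePred, if_pos rfl, abs_sub_comm, hx1n]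
    · rw [cyclePred, if_neg h1]
      exact hx i (by grind) (mem_Icc.mp hi).2
  obtain ⟨I, hI, hbal⟩ :=
    Finset.exists_sum_eq_sum_sdiff_of_abs_eq habs (sum_sub_cyclePred n x)
  exact ⟨I, hI, by exact_mod_cast hbal⟩

/-- Converse direction of Saxe's reduction: a realization of the weighted cycle
on the real line yields a solution of Partition. -/
theorem cycle_realization_yields_partition
    (n : ℕ) (hn : 2 ≤ n) (a : ℕ → ℤ)
    (hpos : ∀ i ∈ Finset.Icc 1 n, 0 < a i)
    (x : ℕ → ℝ)
    (hx : ∀ i, 1 < i → i ≤ n → |x (i - 1) - x i| = (a i : ℝ))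
    (hx1n : |x 1 - x n| = (a 1 : ℝ)) :
    ∃ I : Finset ℕ, I ⊆ Finset.Icc 1 n ∧
      ∑ i ∈ I, a i = ∑ i ∈ Finset.Icc 1 n \ I, a i :=
  cycle_realization_yields_partition_general n a x hx hx1n
end

section
/- Let G = (V,E) be a finite connected simple graph and let d : E → ℚ assign a rational weight to each edge. If there exists x : V → ℝ with |x_u − x_v| = d_{uv} for every edge {u,v} ∈ E, then there exists a realization y : V → ℚ with |y_u − y_v| = d_{uv} for every edge {u,v} ∈ E. -/
/-- A connected graph with rational edge weights that is realizable on the real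
line admits a rational realization. -/
theorem rational_realization_of_real_realization
    (V : Type*) [Fintype V] (G : SimpleGraph V) (hG : G.Connected)
    (d : V → V → ℚ) (x : V → ℝ)
    (hx : ∀ u v, G.Adj u v → |x u - x v| = (d u v : ℝ)) :
    ∃ y : V → ℚ, ∀ u v, G.Adj u v → |y u - y v| = d u v := by
  have hadj : ∀ u v, G.Adj u v → ∃ q : ℚ, x u - x v = (q : ℝ) := by
    intro u v h
    rcases abs_cases (x u - x v) with ⟨he, _⟩ | ⟨he, _⟩
    · exact ⟨d u v, by rw [← hx u v h, he]⟩
    · exact ⟨-(d u v), by push_cast; rw [← hx u v h]; linarith [he]⟩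
  have hwalk : ∀ u v, G.Walk u v → ∃ q : ℚ, x u - x v = (q : ℝ) := by
    intro u v p
    induction p with
    | nil => exact ⟨0, by simp⟩
    | cons h p ih =>
      obtain ⟨q₁, hq₁⟩ := hadj _ _ h
      obtain ⟨q₂, hq₂⟩ := ih
      exact ⟨q₁ + q₂, by push_cast; rw [← hq₁, ← hq₂]; ring⟩
  obtain ⟨v₀⟩ := hG.nonempty
  have key : ∀ u, ∃ q : ℚ, x u - x v₀ = (q : ℝ) := fun u =>
    hwalk u v₀ (hG u v₀).some
  choose y hy using key
  refine ⟨y, fun u v h => ?_⟩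
  have : ((y u - y v : ℚ) : ℝ) = x u - x v := by
    push_cast; rw [← hy u, ← hy v]; ring
  have habs : ((|y u - y v| : ℚ) : ℝ) = ((d u v : ℚ) : ℝ) := by
    push_cast at this ⊢; rw [this]; exact hx u v h
  exact_mod_cast habs
end

section
/- Let G = (V,E) be a finite simple graph and x : V → ℝ^K a framework. If (G,x) is infinitesimally rigid — i.e., every v : V → ℝ^K satisfying ⟨x_u − x_w, v_u − v_w⟩ = 0 for all edges {u,w} ∈ E is a trivial infinitesimal motion — then (G,x) is rigid: there exists ε > 0 such that every x' : V → ℝ^K with ‖x'_u − x_u‖ < ε for all u ∈ V and ‖x'_u − x'_v‖ = ‖x_u − x_v‖ for all edges {u,v} ∈ E satisfies ‖x'_u − x'_v‖ = ‖x_u − x_v‖ for ALL pairs u, v ∈ V. -/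
open scoped RealInnerProductSpace Matrix

/-!
Replace a nearby realization `x'` with the same edge lengths by its image `z` under the rigid
motion of `E` that brings it closest to `x` in the sum of squared distances. First-order
optimality along the curves `s ↦ exp (s • a) z + s • b` (with `a` skew) makes `z - x` orthogonal
to every trivial motion `a z + b`. If such aligned realizations `z ≠ x` accumulated at `x`, the
tangent cone at `x` of the set they form would contain some `v ≠ 0`. Differentiating the edge
lengths shows that `v` is an infinitesimal motion, hence trivial, `v = a x + b`; differentiating
the optimality condition shows that `v` is orthogonal to `a x + b = v`, so `v = 0`. Hence `x` is
isolated among aligned realizations, and every aligned realization close to `x` is `x` itself.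
-/

open Filter Set Topology NormedSpace

theorem HasFDerivWithinAt.apply_eq_zero_of_mem_tangentConeAt {𝕜 E F : Type*}
    [NontriviallyNormedField 𝕜] [NormedAddCommGroup E] [NormedSpace 𝕜 E]
    [NormedAddCommGroup F] [NormedSpace 𝕜 F] {f : E → F} {f' : E →L[𝕜] F} {s : Set E} {x : E}
    (hf : HasFDerivWithinAt f f' s x) (hconst : ∀ y ∈ s, f y = f x) {v : E}
    (hv : v ∈ tangentConeAt 𝕜 s x) : f' v = 0 := by
  have himage : f '' s ⊆ {f x} := image_subset_iff.2 hconst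
  have hisolated : ¬AccPt (f x) (𝓟 {f x}) := by
    rw [accPt_principal_iff_nhdsWithin, sdiff_self, nhdsWithin_empty]
    exact not_neBot.2 rfl
  exact tangentConeAt_subset_zero hisolated (tangentConeAt_mono himage (hf.mapsTo_tangent_cone hv))

namespace Framework

variable {V E : Type*} [Fintype V] [NormedAddCommGroup E]

def sumSqDist (x y : V → E) : ℝ := ∑ u, ‖y u - x u‖ ^ 2

theorem continuous_sumSqDist (x : V → E) : Continuous (sumSqDist x) := by
  unfold sumSqDist
  fun_prop

theorem dist_le_sqrt_sumSqDist (x y : V → E) : dist y x ≤ √(sumSqDist x y) :=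
  (dist_pi_le_iff (Real.sqrt_nonneg _)).2 fun u => Real.le_sqrt_of_sq_le <| by
    rw [dist_eq_norm]
    exact Finset.single_le_sum (f := fun u => ‖y u - x u‖ ^ 2) (fun _ _ => sq_nonneg _)
      (Finset.mem_univ u)

variable [InnerProductSpace ℝ E]

theorem sum_norm_sub_mean_sq_le (p : V → E) (c : E) :
    ∑ u, ‖p u - (Fintype.card V : ℝ)⁻¹ • ∑ w, p w‖ ^ 2 ≤ ∑ u, ‖p u - c‖ ^ 2 := by
  set m := (Fintype.card V : ℝ)⁻¹ • ∑ w, p w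
  have hsum : ∑ u, (p u - m) = 0 := by
    rcases isEmpty_or_nonempty V with hV | hV
    · simp
    rw [Finset.sum_sub_distrib, Finset.sum_const, Finset.card_univ, ← Nat.cast_smul_eq_nsmul ℝ,
      smul_smul, mul_inv_cancel₀ (by positivity), one_smul, sub_self]
  calc ∑ u, ‖p u - m‖ ^ 2
      ≤ ∑ u, ‖p u - m‖ ^ 2 + 2 * ⟪∑ u, (p u - m), m - c⟫ + Fintype.card V * ‖m - c‖ ^ 2 := by
        rw [hsum, inner_zero_left]
        nlinarith [norm_nonneg (m - c)]
    _ = ∑ u, ‖p u - c‖ ^ 2 := by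
        simp only [← sub_add_sub_cancel (p _) m c, norm_add_sq_real, Finset.sum_add_distrib,
          sum_inner, Finset.mul_sum, Finset.sum_const, Finset.card_univ, nsmul_eq_mul]

variable [CompleteSpace E]

def IsAlignedTo (x z : V → E) : Prop :=
  ∀ R ∈ unitary (E →L[ℝ] E), ∀ c : E, sumSqDist x z ≤ sumSqDist x fun u => R (z u) + c

theorem isCompact_unitary [FiniteDimensional ℝ E] :
    IsCompact (unitary (E →L[ℝ] E) : Set (E →L[ℝ] E)) := by
  refine Metric.isCompact_of_isClosed_isBounded isClosed_unitary ?_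
  refine isBounded_iff_forall_norm_le.2 ⟨1, fun U hU => ?_⟩
  exact U.opNorm_le_bound zero_le_one fun y => by
    rw [ContinuousLinearMap.norm_map_of_mem_unitary hU, one_mul]

theorem exists_isAlignedTo [FiniteDimensional ℝ E] (x x' : V → E) :
    ∃ z, (∀ u w, ‖z u - z w‖ = ‖x' u - x' w‖) ∧ sumSqDist x z ≤ sumSqDist x x' ∧
      IsAlignedTo x z := by
  let mean : (V → E) → E := fun p => (Fintype.card V : ℝ)⁻¹ • ∑ w, p w
  let p : (E →L[ℝ] E) → V → E := fun R u => R (x' u) - x u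
  -- for a fixed orthogonal `R`, translating by the mean of `p R` is optimal
  let F : (E →L[ℝ] E) → ℝ := fun R => ∑ u, ‖p R u - mean (p R)‖ ^ 2
  have hF : ∀ R c, F R ≤ sumSqDist x fun u => R (x' u) + c := fun R c =>
    (sum_norm_sub_mean_sq_le (p R) (-c)).trans_eq <| by
      simp only [sumSqDist, p, sub_neg_eq_add, sub_add_eq_add_sub]
  have hcont : Continuous F := by fun_prop
  obtain ⟨Q, hQ, hmin⟩ := isCompact_unitary.exists_isMinOn ⟨1, one_mem _⟩ hcont.continuousOn
  have hFQ : sumSqDist x (fun u => Q (x' u) - mean (p Q)) = F Q := by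
    simp only [sumSqDist, F, p, sub_right_comm]
  refine ⟨fun u => Q (x' u) - mean (p Q), fun u w => ?_, ?_, fun R hR c => ?_⟩
  · rw [sub_sub_sub_cancel_right, ← map_sub, ContinuousLinearMap.norm_map_of_mem_unitary hQ]
  · calc _ = F Q := hFQ
      _ ≤ F 1 := hmin (one_mem _)
      _ ≤ _ := by simpa using hF 1 0
  · calc _ = F Q := hFQ
      _ ≤ F (R * Q) := hmin (mul_mem hR hQ)
      _ ≤ _ := hF _ (c - R (mean (p Q)))
      _ = _ := by
        simp only [mul_apply_eq_comp, map_sub]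
        congr
        ext
        abel

theorem IsAlignedTo.sum_inner_eq_zero {x z : V → E} (h : IsAlignedTo x z) {a : E →L[ℝ] E}
    (ha : a ∈ skewAdjoint (E →L[ℝ] E)) (b : E) :
    ∑ u, ⟪a (z u) + b, z u - x u⟫ = 0 := by
  -- `exp` is stated over the `ℚ`-algebra structure
  let +nondep : NormedAlgebra ℚ (E →L[ℝ] E) := .restrictScalars ℚ ℝ _
  let γ : V → ℝ → E := fun u s => exp (s • a) (z u) + s • b - x u
  have hγ : ∀ u, HasDerivAt (γ u) (a (z u) + b) 0 := fun u => by
    refine ((((hasDerivAt_exp_smul_const (𝕂 := ℝ) a 0).clm_apply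
      (hasDerivAt_const 0 (z u))).add ((hasDerivAt_id 0).smul_const b)).sub_const
      (x u)).congr_deriv ?_
    simp
  have hmin : IsLocalMin (fun s => ∑ u, ‖γ u s‖ ^ 2) 0 := Eventually.of_forall fun s => by
    simpa [γ, sumSqDist, add_sub_right_comm] using
      h _ (exp_mem_unitary_of_mem_skewAdjoint (skewAdjoint.smul_mem s ha)) (s • b)
  have hderiv := hmin.hasDerivAt_eq_zero (HasDerivAt.fun_sum fun u _ => (hγ u).norm_sq)
  simpa [γ, ← Finset.mul_sum, real_inner_comm] using hderiv

section Rigidity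

variable (G : SimpleGraph V) (x : V → E)

def IsInfinitesimalMotion (v : V → E) : Prop :=
  ∀ u w, G.Adj u w → ⟪x u - x w, v u - v w⟫ = 0

def IsTrivialMotion (v : V → E) : Prop :=
  ∃ a ∈ skewAdjoint (E →L[ℝ] E), ∃ b : E, ∀ u, v u = a (x u) + b

def IsInfinitesimallyRigid : Prop :=
  ∀ v, IsInfinitesimalMotion G x v → IsTrivialMotion x v

def IsRigid : Prop :=
  ∃ ε > (0 : ℝ), ∀ x' : V → E, (∀ u, ‖x' u - x u‖ < ε) →
    (∀ u w, G.Adj u w → ‖x' u - x' w‖ = ‖x u - x w‖) →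
    ∀ u w : V, ‖x' u - x' w‖ = ‖x u - x w‖

def alignedRealizations : Set (V → E) :=
  {z | (∀ u w, G.Adj u w → ‖z u - z w‖ = ‖x u - x w‖) ∧ IsAlignedTo x z}

variable {G x}

theorem isInfinitesimalMotion_of_mem_tangentConeAt {v : V → E}
    (hv : v ∈ tangentConeAt ℝ (alignedRealizations G x) x) : IsInfinitesimalMotion G x v := by
  intro u w huw
  have hf : HasFDerivAt (fun y : V → E => ‖y u - y w‖ ^ 2) _ x :=
    ((hasFDerivAt_apply u x).sub (hasFDerivAt_apply w x)).norm_sq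
  have := hf.hasFDerivWithinAt.apply_eq_zero_of_mem_tangentConeAt
    (fun y hy => by rw [hy.1 u w huw]) hv
  simpa [inner_sub_left, inner_sub_right] using this

theorem sum_inner_eq_zero_of_mem_tangentConeAt {v : V → E}
    (hv : v ∈ tangentConeAt ℝ (alignedRealizations G x) x) {a : E →L[ℝ] E}
    (ha : a ∈ skewAdjoint (E →L[ℝ] E)) (b : E) :
    ∑ u, ⟪a (x u) + b, v u⟫ = 0 := by
  have hf : HasFDerivAt (fun y : V → E => ∑ u, ⟪a (y u) + b, y u - x u⟫) _ x :=
    HasFDerivAt.fun_sum fun u _ =>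
      ((a.hasFDerivAt.comp x (hasFDerivAt_apply u x)).add_const b).inner ℝ
        ((hasFDerivAt_apply u x).sub_const (x u))
  have := hf.hasFDerivWithinAt.apply_eq_zero_of_mem_tangentConeAt
    (fun y hy => by rw [hy.2.sum_inner_eq_zero ha b]; simp) hv
  simpa using this

theorem IsInfinitesimallyRigid.tangentConeAt_alignedRealizations_subset
    (hrig : IsInfinitesimallyRigid G x) :
    tangentConeAt ℝ (alignedRealizations G x) x ⊆ {0} := by
  intro v hv
  obtain ⟨a, ha, b, hab⟩ := hrig v (isInfinitesimalMotion_of_mem_tangentConeAt hv)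
  have hsum : ∑ u, ⟪v u, v u⟫ = 0 := by
    simpa only [← hab] using sum_inner_eq_zero_of_mem_tangentConeAt hv ha b
  have hzero := (Finset.sum_eq_zero_iff_of_nonneg fun u _ => real_inner_self_nonneg).1 hsum
  exact funext fun u => inner_self_eq_zero.1 (hzero u (Finset.mem_univ u))

theorem IsInfinitesimallyRigid.not_accPt_alignedRealizations [FiniteDimensional ℝ E]
    (hrig : IsInfinitesimallyRigid G x) : ¬AccPt x (𝓟 (alignedRealizations G x)) := fun hacc => by
  obtain ⟨v, hv, hv0⟩ := tangentConeAt_nonempty_of_properSpace (𝕜 := ℝ) hacc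
  exact hv0 (hrig.tangentConeAt_alignedRealizations_subset hv)

theorem IsInfinitesimallyRigid.isRigid [FiniteDimensional ℝ E]
    (hrig : IsInfinitesimallyRigid G x) : IsRigid G x := by
  obtain ⟨U, hU, hisolated⟩ : ∃ U ∈ 𝓝 x, ∀ z ∈ U ∩ alignedRealizations G x, z = x := by
    simpa [accPt_iff_nhds] using hrig.not_accPt_alignedRealizations
  obtain ⟨δ, hδ, hball⟩ := Metric.mem_nhds_iff.1 hU
  have hsmall : ∀ᶠ y in 𝓝 x, sumSqDist x y < δ ^ 2 := by
    refine (continuous_sumSqDist x).tendsto x |>.eventually_lt_const ?_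
    simpa [sumSqDist] using pow_pos hδ 2
  obtain ⟨ε, hε, hε_small⟩ := Metric.eventually_nhds_iff.1 hsmall
  refine ⟨ε, hε, fun x' hx' hedge u w => ?_⟩
  obtain ⟨z, hz_dist, hz_le, hz_aligned⟩ := exists_isAlignedTo x x'
  have hzx : dist z x < δ := by
    calc dist z x ≤ √(sumSqDist x z) := dist_le_sqrt_sumSqDist x z
      _ < δ := (Real.sqrt_lt' hδ).2 <| hz_le.trans_lt <| hε_small <|
          (dist_pi_lt_iff hε).2 fun u => by rw [dist_eq_norm]; exact hx' u
  have hz_eq : z = x :=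
    hisolated z ⟨hball hzx, fun u w huw => (hz_dist u w).trans (hedge u w huw), hz_aligned⟩
  rw [← hz_dist, hz_eq]

end Rigidity

end Framework

theorem rigid_of_infinitesimally_rigid_general
    (V : Type*) [Fintype V] (K : ℕ) (G : SimpleGraph V)
    (x : V → EuclideanSpace ℝ (Fin K))
    (hinf : ∀ v : V → EuclideanSpace ℝ (Fin K),
      (∀ u w, G.Adj u w → ⟪x u - x w, v u - v w⟫ = 0) →
      ∃ A : Matrix (Fin K) (Fin K) ℝ, Aᵀ = -A ∧
        ∃ b : EuclideanSpace ℝ (Fin K), ∀ u, ∀ i, v u i = A.mulVec (x u) i + b i) :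
    ∃ ε > (0 : ℝ), ∀ x' : V → EuclideanSpace ℝ (Fin K),
      (∀ u, ‖x' u - x u‖ < ε) →
      (∀ u w, G.Adj u w → ‖x' u - x' w‖ = ‖x u - x w‖) →
      ∀ u w : V, ‖x' u - x' w‖ = ‖x u - x w‖ := by
  refine Framework.IsInfinitesimallyRigid.isRigid fun v hv => ?_
  obtain ⟨A, hA, b, hAb⟩ := hinf v hv
  refine ⟨Matrix.toEuclideanCLM (𝕜 := ℝ) A, ?_, b, fun u => ?_⟩
  · rw [skewAdjoint.mem_iff, ← map_star, Matrix.star_eq_conjTranspose,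
      Matrix.conjTranspose_eq_transpose_of_trivial, hA, map_neg]
  · ext i
    simp [hAb u i, Matrix.ofLp_toEuclideanCLM]

/-- Infinitesimal rigidity implies rigidity: if every infinitesimal motion of the
framework `(G, x)` is trivial, then in a neighbourhood of `x` every realization
with the same edge lengths preserves all pairwise distances. -/
theorem rigid_of_infinitesimally_rigid
    (V : Type*) [Fintype V] (K : ℕ) (hK : 0 < K) (G : SimpleGraph V)
    (x : V → EuclideanSpace ℝ (Fin K))
    (hinf : ∀ v : V → EuclideanSpace ℝ (Fin K),
      (∀ u w, G.Adj u w → ⟪x u - x w, v u - v w⟫ = 0) →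
      ∃ A : Matrix (Fin K) (Fin K) ℝ, Aᵀ = -A ∧
        ∃ b : EuclideanSpace ℝ (Fin K), ∀ u, ∀ i, v u i = A.mulVec (x u) i + b i) :
    ∃ ε > (0 : ℝ), ∀ x' : V → EuclideanSpace ℝ (Fin K),
      (∀ u, ‖x' u - x u‖ < ε) →
      (∀ u w, G.Adj u w → ‖x' u - x' w‖ = ‖x u - x w‖) →
      ∀ u w : V, ‖x' u - x' w‖ = ‖x u - x w‖ :=
  rigid_of_infinitesimally_rigid_general V K G x hinf
end

section
/- Let K ≥ 1, let p₁, …, p_K ∈ ℝ^K be affinely independent points, and let r₁, …, r_K ≥ 0. Then the intersection of the K spheres {y ∈ ℝ^K : ‖y − pᵢ‖ = rᵢ}, i = 1, …, K, contains at most two points. -/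
open scoped RealInnerProductSpace

/-- Key step: if `x ≠ y` and `x, y, z` all lie on all `K` spheres, then `z = x ∨ z = y`. -/
theorem spheres_key
    (K : ℕ) (hK : 1 ≤ K) (p : Fin K → EuclideanSpace ℝ (Fin K))
    (hp : AffineIndependent ℝ p) (r : Fin K → ℝ)
    {x y z : EuclideanSpace ℝ (Fin K)}
    (hx : ∀ i, ‖x - p i‖ = r i) (hy : ∀ i, ‖y - p i‖ = r i)
    (hz : ∀ i, ‖z - p i‖ = r i) (hxy : x ≠ y) : z = x ∨ z = y := by
  have : NeZero K := ⟨Nat.one_le_iff_ne_zero.mp hK⟩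
  set i₀ : Fin K := 0
  -- orthogonality: any two points of the intersection differ by a vector
  -- orthogonal to all `p i - p i₀`.
  have key : ∀ (a b : EuclideanSpace ℝ (Fin K)), (∀ i, ‖a - p i‖ = r i) → (∀ i, ‖b - p i‖ = r i) →
      ∀ i : Fin K, ⟪p i - p i₀, b - a⟫ = 0 := by
    intro a b ha hb i
    have h1 : dist a (p i₀) = dist b (p i₀) := by
      simp only [dist_eq_norm]; rw [ha i₀, hb i₀]
    have h2 : dist a (p i) = dist b (p i) := by
      simp only [dist_eq_norm]; rw [ha i, hb i]
    have := EuclideanGeometry.inner_vsub_vsub_of_dist_eq_of_dist_eq h1 h2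
    simpa using this
  -- the span of the difference vectors
  set W : Submodule ℝ (EuclideanSpace ℝ (Fin K)) :=
    Submodule.span ℝ (Set.range (fun j : {j : Fin K // j ≠ i₀} => p j - p i₀)) with hW
  have hli : LinearIndependent ℝ (fun j : {j : Fin K // j ≠ i₀} => p j - p i₀) := by
    have := (affineIndependent_iff_linearIndependent_vsub ℝ p i₀).mp hp
    simpa using this
  have hcard : Fintype.card {j : Fin K // j ≠ i₀} = K - 1 := by
    simp [Fintype.card_subtype_compl, Fintype.card_fin]
  have hWrank : Module.finrank ℝ W = K - 1 := by
    rw [hW, finrank_span_eq_card hli, hcard]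
  have hErank : Module.finrank ℝ (EuclideanSpace ℝ (Fin K)) = K := finrank_euclideanSpace_fin
  have hWorank : Module.finrank ℝ Wᗮ = 1 := by
    have := Submodule.finrank_add_finrank_orthogonal (K := W)
    omega
  -- membership in the orthogonal complement
  have mem_orth : ∀ (a b : EuclideanSpace ℝ (Fin K)), (∀ i, ‖a - p i‖ = r i) → (∀ i, ‖b - p i‖ = r i) →
      b - a ∈ Wᗮ := by
    intro a b ha hb
    rw [Submodule.mem_orthogonal]
    intro u hu
    induction hu using Submodule.span_induction with
    | mem u hu =>
        obtain ⟨j, rfl⟩ := hu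
        exact key a b ha hb j
    | zero => simp
    | add u v _ _ h1 h2 => rw [inner_add_left, h1, h2, add_zero]
    | smul c u _ h1 => rw [inner_smul_left, h1, mul_zero]
  have hyx : y - x ∈ Wᗮ := mem_orth x y hx hy
  have hzx : z - x ∈ Wᗮ := mem_orth x z hx hz
  have hyx0 : y - x ≠ 0 := sub_ne_zero.mpr (Ne.symm hxy)
  -- `Wᗮ` is spanned by `y - x`
  have hspan : Submodule.span ℝ {y - x} = Wᗮ := by
    apply Submodule.eq_of_le_of_finrank_eq
    · rw [Submodule.span_le, Set.singleton_subset_iff]; exact hyx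
    · rw [finrank_span_singleton hyx0, hWorank]
  rw [← hspan, Submodule.mem_span_singleton] at hzx
  obtain ⟨t, ht⟩ := hzx
  -- quadratic argument on the sphere centered at `p i₀`
  set u : EuclideanSpace ℝ (Fin K) := x - p i₀ with hu
  set w : EuclideanSpace ℝ (Fin K) := y - x with hw
  have hz' : z = x + t • w := by rw [ht]; abel
  have hz0 : z - p i₀ = u + t • w := by rw [hz', hu]; abel
  have hy0 : y - p i₀ = u + w := by rw [hu, hw]; abel
  have hnx : ‖u‖ = r i₀ := by rw [hu]; exact hx i₀
  have hny : ‖u + w‖ ^ 2 = ‖u‖ ^ 2 := by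
    rw [← hy0, hnx, hy i₀]
  have hnz : ‖u + t • w‖ ^ 2 = ‖u‖ ^ 2 := by
    rw [← hz0, hnx, hz i₀]
  rw [@norm_add_sq_real] at hny hnz
  have hiw : 2 * ⟪u, w⟫ = -‖w‖ ^ 2 := by linarith [hny]
  have hq : t * (t - 1) * ‖w‖ ^ 2 = 0 := by
    rw [inner_smul_right, norm_smul, Real.norm_eq_abs, mul_pow, sq_abs] at hnz
    linear_combination hnz - t * hiw
  have hw0 : ‖w‖ ^ 2 ≠ 0 := by
    simpa using hyx0
  have ht01 : t = 0 ∨ t = 1 := by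
    rcases mul_eq_zero.mp hq with h | h
    · rcases mul_eq_zero.mp h with h | h
      · exact Or.inl h
      · exact Or.inr (by linarith)
    · exact absurd h hw0
  rcases ht01 with rfl | rfl
  · left; have := ht; simpa [sub_eq_zero, eq_comm] using this
  · right; have := ht; rw [one_smul, hw] at this
    have : z = y := by
      have h' : z - x = y - x := this.symm
      exact sub_left_injective h'
    exact this

/-- The intersection of `K` spheres in `ℝ^K` with affinely independent centers
contains at most two points. -/
theorem spheres_inter_at_most_two
    (K : ℕ) (hK : 1 ≤ K) (p : Fin K → EuclideanSpace ℝ (Fin K))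
    (hp : AffineIndependent ℝ p) (r : Fin K → ℝ) (hr : ∀ i, 0 ≤ r i) :
    ∃ a b : EuclideanSpace ℝ (Fin K),
      {y : EuclideanSpace ℝ (Fin K) | ∀ i, ‖y - p i‖ = r i} ⊆ {a, b} := by
  set S := {y : EuclideanSpace ℝ (Fin K) | ∀ i, ‖y - p i‖ = r i} with hS
  by_cases h : ∃ a ∈ S, ∃ b ∈ S, a ≠ b
  · obtain ⟨a, ha, b, hb, hab⟩ := h
    refine ⟨a, b, fun z hz => ?_⟩
    rcases spheres_key K hK p hp r ha hb hz hab with h | h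
    · exact Or.inl h
    · exact Or.inr h
  · push_neg at h
    by_cases hne : S.Nonempty
    · obtain ⟨a, ha⟩ := hne
      exact ⟨a, a, fun z hz => Or.inl (h z hz a ha)⟩
    · exact ⟨0, 0, fun z hz => absurd ⟨z, hz⟩ hne⟩
end

section
/- Let V be a finite set with n = |V| ≥ 1 and let D be a symmetric real V×V matrix with zero diagonal. Let J = I − (1/n)·𝟙𝟙ᵀ be the centering matrix and B = −(1/2) J D J. Then D is a squared Euclidean distance matrix — i.e., there exist K ≥ 1 and x : V → ℝ^K with D_{uv} = ‖x_u − x_v‖² for all u, v ∈ V — if and only if B is positive semidefinite. -/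
/-!
If `x` realizes `D` with Gram matrix `G`, then `D = d 𝟙ᵀ + 𝟙 dᵀ - 2 G` with `d = diag G`, and
since `J 𝟙 = 0` this gives `B = J G J`, which is positive semidefinite. Conversely a positive
semidefinite `B` factors as `Aᵀ A`, so it is the Gram matrix of the columns of `A`; testing `B`
against `e_u - e_v`, which `J` fixes, shows that for hollow symmetric `D` we have
`D u v = B u u + B v v - 2 B u v`, which is the squared distance between columns `u` and `v`.
-/

open Finset

namespace Matrix

variable {R V : Type*}

theorem norm_sub_sq_eq_gram {E : Type*} [NormedAddCommGroup E] [InnerProductSpace ℝ E]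
    (x : V → E) (u v : V) :
    ‖x u - x v‖ ^ 2 = gram ℝ x u u + gram ℝ x v v - gram ℝ x u v - gram ℝ x v u := by
  simp only [gram_apply, real_inner_self_eq_norm_sq, real_inner_comm (x u), norm_sub_sq_real]
  ring

variable [Fintype V] [DecidableEq V]

variable (R V) in
def centeringMatrix [Field R] : Matrix V V R :=
  1 - (Fintype.card V : R)⁻¹ • of fun _ _ => 1

section Field

variable [Field R]

theorem transpose_centeringMatrix : (centeringMatrix R V)ᵀ = centeringMatrix R V := by
  simp [centeringMatrix, transpose_sub, ← Matrix.ext_iff]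

theorem centeringMatrix_mulVec (z : V → R) :
    centeringMatrix R V *ᵥ z = z - (Fintype.card V : R)⁻¹ • Function.const V (∑ i, z i) := by
  rw [centeringMatrix, sub_mulVec, one_mulVec, smul_mulVec]
  congr 2
  ext v
  simp [mulVec, dotProduct]

theorem centeringMatrix_mulVec_of_sum_eq_zero {z : V → R} (hz : ∑ i, z i = 0) :
    centeringMatrix R V *ᵥ z = z := by
  simp [centeringMatrix_mulVec, hz]

theorem centeringMatrix_mulVec_one [CharZero R] [Nonempty V] :
    centeringMatrix R V *ᵥ 1 = 0 := by
  ext v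
  simp [centeringMatrix_mulVec]

theorem one_vecMul_centeringMatrix [CharZero R] [Nonempty V] :
    1 ᵥ* centeringMatrix R V = 0 := by
  rw [← transpose_centeringMatrix, vecMul_transpose, centeringMatrix_mulVec_one]

variable (R) in
def doubleCentering (D : Matrix V V R) : Matrix V V R :=
  -(1 / 2 : R) • (centeringMatrix R V * D * centeringMatrix R V)

end Field

theorem dotProduct_mulVec_single_sub_single [CommRing R] (M : Matrix V V R) (u v : V) :
    (Pi.single u 1 - Pi.single v 1) ⬝ᵥ (M *ᵥ (Pi.single u 1 - Pi.single v 1)) =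
      M u u + M v v - M u v - M v u := by
  simp only [mulVec_sub, mulVec_single, MulOpposite.op_one, one_smul, dotProduct_sub,
    sub_dotProduct, single_dotProduct, col_apply, one_mul]
  ring

theorem IsSymm.apply_eq_doubleCentering [Field R] [NeZero (2 : R)] {D : Matrix V V R}
    (hD : D.IsSymm) (hdiag : ∀ v, D v v = 0) (u v : V) :
    D u v = doubleCentering R D u u + doubleCentering R D v v - doubleCentering R D u v -
      doubleCentering R D v u := by
  set z : V → R := Pi.single u 1 - Pi.single v 1
  have hJz : centeringMatrix R V *ᵥ z = z :=
    centeringMatrix_mulVec_of_sum_eq_zero (by simp [z, sum_sub_distrib])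
  have hzJ : z ᵥ* centeringMatrix R V = z := by
    rw [← transpose_centeringMatrix, vecMul_transpose, hJz]
  rw [← dotProduct_mulVec_single_sub_single, doubleCentering, smul_mulVec, dotProduct_smul,
    ← mulVec_mulVec, ← mulVec_mulVec, dotProduct_mulVec, hzJ, hJz,
    dotProduct_mulVec_single_sub_single, hdiag, hdiag, hD.apply u v, smul_eq_mul]
  field_simp
  ring

section InnerProductSpace

variable {E : Type*} [NormedAddCommGroup E] [InnerProductSpace ℝ E]

theorem doubleCentering_norm_sub_sq [Nonempty V] (x : V → E) :
    doubleCentering ℝ (of fun u v => ‖x u - x v‖ ^ 2) =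
      centeringMatrix ℝ V * gram ℝ x * centeringMatrix ℝ V := by
  set d : V → ℝ := fun v => ‖x v‖ ^ 2
  have hD : (of fun u v => ‖x u - x v‖ ^ 2) =
      vecMulVec d 1 + vecMulVec 1 d - (2 : ℝ) • gram ℝ x := by
    ext u v
    simp only [norm_sub_sq_real, of_apply, vecMulVec_one, one_vecMulVec, sub_apply, add_apply,
      replicateCol_apply, replicateRow_apply, smul_apply, gram_apply, smul_eq_mul, d]
    ring
  rw [doubleCentering, hD, mul_sub, mul_add, sub_mul, add_mul, mul_vecMulVec, mul_vecMulVec,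
    vecMulVec_mul, vecMulVec_mul, centeringMatrix_mulVec_one, one_vecMul_centeringMatrix]
  simp [smul_smul]

theorem posSemidef_doubleCentering_norm_sub_sq [Nonempty V] (x : V → E) :
    (doubleCentering ℝ (of fun u v => ‖x u - x v‖ ^ 2)).PosSemidef := by
  rw [doubleCentering_norm_sub_sq]
  nth_rw 1 [← transpose_centeringMatrix]
  exact (posSemidef_gram ℝ x).conjTranspose_mul_mul_same _

end InnerProductSpace

open scoped ComplexOrder MatrixOrder in
theorem PosSemidef.exists_gram_eq {𝕜 : Type*} [RCLike 𝕜] {B : Matrix V V 𝕜} (hB : B.PosSemidef) :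
    ∃ x : V → EuclideanSpace 𝕜 V, gram 𝕜 x = B := by
  obtain ⟨A, hA⟩ : ∃ A : Matrix V V 𝕜, B = Aᴴ * A := by
    have hsqrt := nonneg_iff_posSemidef.mp (CFC.sqrt_nonneg B)
    refine ⟨CFC.sqrt B, ?_⟩
    rw [hsqrt.isHermitian.eq, CFC.sqrt_mul_sqrt_self B hB.nonneg]
  refine ⟨fun v => WithLp.toLp 2 (fun i => A i v), ?_⟩
  rw [gram_eq_conjTranspose_mul (EuclideanSpace.basisFun V 𝕜), hA]
  rfl

end Matrix

open Matrix

/-- Schoenberg's criterion: a symmetric hollow matrix `D` is a squared Euclidean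
distance matrix iff `B = −(1/2) J D J` is positive semidefinite. -/
theorem sqEDM_iff_posSemidef
    (V : Type*) [Fintype V] [DecidableEq V] [Nonempty V]
    (n : ℕ) (hn : n = Fintype.card V)
    (D : Matrix V V ℝ) (hsymm : D.IsSymm) (hdiag : ∀ v, D v v = 0)
    (J B : Matrix V V ℝ)
    (hJ : J = (1 : Matrix V V ℝ) - (n : ℝ)⁻¹ • Matrix.of (fun _ _ => (1 : ℝ)))
    (hB : B = -(1 / 2 : ℝ) • (J * D * J)) :
    (∃ K : ℕ, 1 ≤ K ∧ ∃ x : V → EuclideanSpace ℝ (Fin K),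
        ∀ u v, D u v = ‖x u - x v‖ ^ 2) ↔ B.PosSemidef := by
  subst hn hJ hB
  change _ ↔ (doubleCentering ℝ D).PosSemidef
  constructor
  · rintro ⟨K, -, x, hx⟩
    obtain rfl : D = of fun u v => ‖x u - x v‖ ^ 2 := Matrix.ext fun u v => by rw [hx, of_apply]
    exact posSemidef_doubleCentering_norm_sub_sq x
  · intro hB
    obtain ⟨x, hx⟩ := hB.exists_gram_eq
    let e := LinearIsometryEquiv.piLpCongrLeft 2 ℝ ℝ (Fintype.equivFin V)
    refine ⟨Fintype.card V, Fintype.card_pos, fun v => e (x v), fun u v => ?_⟩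
    rw [← map_sub, e.norm_map, norm_sub_sq_eq_gram, hx, hsymm.apply_eq_doubleCentering hdiag]
end

section
/- Let G = (V,E) be a finite simple graph with m = |E| edges and d : E → ℝ₊. If there exists a positive semidefinite symmetric real V×V matrix B with B_{ii} + B_{jj} − 2B_{ij} = d_{ij}² for all {i,j} ∈ E, then there exists such a positive semidefinite matrix B̄ satisfying the same m equations with rank B̄ ≤ ⌊(√(8m+1) − 1)/2⌋. -/
open Matrix Module

/-!
Barvinok's argument. Write the feasible matrix as a Gram matrix `W * Wᵀ` with `r` columns.
If `r (r + 1) / 2 > m`, the `m` linear constraints cannot separate the symmetric `r × r`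
matrices, so some nonzero symmetric `S` has `W * S * Wᵀ` in their kernel. Moving along
`1 + t • S` up to the first `t` at which it becomes singular gives `1 + t • S = N * Nᵀ` with `N`
of only `r - 1` columns, and `W * N` is a feasible Gram factor with fewer columns. Iterate until
`r (r + 1) ≤ 2 m`.
-/

lemma exists_one_add_mul_nonneg_and_eq_zero {ι : Type*} [Finite ι] {f : ι → ℝ}
    (hf : f ≠ 0) :
    ∃ (t : ℝ) (i₀ : ι), (∀ i, 0 ≤ 1 + t * f i) ∧ 1 + t * f i₀ = 0 := by
  obtain ⟨i₁, hi₁⟩ := Function.ne_iff.mp hf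
  have : Nonempty ι := ⟨i₁⟩
  obtain ⟨i₀, hmax⟩ := Finite.exists_max fun i => |f i|
  have hi₀ : 0 < |f i₀| := (abs_pos.mpr hi₁).trans_le (hmax i₁)
  refine ⟨-(f i₀)⁻¹, i₀, fun i => ?_, by field_simp [abs_pos.mp hi₀]; ring⟩
  have h : |(f i₀)⁻¹ * f i| ≤ 1 := by
    rw [abs_mul, abs_inv, inv_mul_le_one₀ hi₀]
    exact hmax i
  linarith [le_abs_self ((f i₀)⁻¹ * f i)]

namespace Matrix

lemma mul_transpose_submatrix_succAbove {m R : Type*} [NonUnitalNonAssocSemiring R] {k : ℕ}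
    (A : Matrix m (Fin (k + 1)) R) (i : Fin (k + 1)) (hA : ∀ j, A j i = 0) :
    A.submatrix id i.succAbove * (A.submatrix id i.succAbove)ᵀ = A * Aᵀ := by
  ext u v
  simp [Matrix.mul_apply, Fin.sum_univ_succAbove _ i, hA]

lemma exists_mul_transpose_eq_one_add_smul {k : ℕ} {S : Matrix (Fin (k + 1)) (Fin (k + 1)) ℝ}
    (hS : S.IsHermitian) (hS0 : S ≠ 0) :
    ∃ (t : ℝ) (N : Matrix (Fin (k + 1)) (Fin k) ℝ), N * Nᵀ = 1 + t • S := by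
  set U : Matrix (Fin (k + 1)) (Fin (k + 1)) ℝ := hS.eigenvectorUnitary.1
  set ev := hS.eigenvalues
  have hUU : U * Uᵀ = 1 := by
    simpa [star_eq_conjTranspose] using (mem_unitaryGroup_iff.mp hS.eigenvectorUnitary.2)
  have hspec : S = U * diagonal ev * Uᵀ := by
    simpa [Unitary.conjStarAlgAut_apply, star_eq_conjTranspose] using hS.spectral_theorem
  have hev : ev ≠ 0 := by
    rintro h
    exact hS0 (by simp [hspec, h])
  obtain ⟨t, i₀, hnonneg, hzero⟩ := exists_one_add_mul_nonneg_and_eq_zero hev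
  set N := U * diagonal fun i => √(1 + t * ev i)
  refine ⟨t, N.submatrix id i₀.succAbove, ?_⟩
  rw [mul_transpose_submatrix_succAbove N i₀ (by simp [N, hzero])]
  calc N * Nᵀ = U * (1 + t • diagonal ev) * Uᵀ := by
        simp only [N, transpose_mul, diagonal_transpose, Matrix.mul_assoc,
          ← Matrix.mul_assoc (diagonal _), diagonal_mul_diagonal, Real.mul_self_sqrt (hnonneg _)]
        congr 2
        ext i j
        by_cases hij : i = j <;> simp [diagonal, hij]
    _ = 1 + t • S := by
        rw [Matrix.mul_add, Matrix.add_mul, Matrix.mul_one, hUU, Matrix.mul_smul, Matrix.smul_mul,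
          ← hspec]

lemma exists_isHermitian_ne_zero_map_eq_zero {ι M : Type*} [Fintype ι] [AddCommGroup M]
    [Module ℝ M] [FiniteDimensional ℝ M] (L : Matrix ι ι ℝ →ₗ[ℝ] M)
    (h : 2 * finrank ℝ M < Fintype.card ι * (Fintype.card ι + 1)) :
    ∃ S : Matrix ι ι ℝ, S.IsHermitian ∧ S ≠ 0 ∧ L S = 0 := by
  classical
  let symm : (Sym2 ι → ℝ) →ₗ[ℝ] Matrix ι ι ℝ :=
    { toFun c := of fun i j => c s(i, j)
      map_add' _ _ := rfl
      map_smul' _ _ := rfl }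
  have hdim : finrank ℝ M < finrank ℝ (Sym2 ι → ℝ) := by
    obtain ⟨q, hq⟩ := Nat.even_mul_succ_self (Fintype.card ι)
    rw [finrank_fintype_fun_eq_card, Sym2.card, Nat.choose_two_right, Nat.add_sub_cancel,
      Nat.mul_comm _ (Fintype.card ι)]
    omega
  obtain ⟨c, hc, hc0⟩ :=
    (Submodule.ne_bot_iff _).mp (LinearMap.ker_ne_bot_of_finrank_lt (f := L ∘ₗ symm) hdim)
  refine ⟨symm c, ?_, fun h0 => hc0 ?_, hc⟩
  · ext i j
    exact congrArg c Sym2.eq_swap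
  · funext e
    induction e with
    | _ i j => exact congrFun (congrFun h0 i) j

variable {n M : Type*} [AddCommGroup M] [Module ℝ M] [FiniteDimensional ℝ M]

lemma exists_map_mul_transpose_eq_of_finrank_lt (L : Matrix n n ℝ →ₗ[ℝ] M) {k : ℕ}
    (W : Matrix n (Fin (k + 1)) ℝ) (h : 2 * finrank ℝ M < (k + 1) * (k + 2)) :
    ∃ W' : Matrix n (Fin k) ℝ, L (W' * W'ᵀ) = L (W * Wᵀ) := by
  obtain ⟨S, hS, hS0, hLS⟩ := exists_isHermitian_ne_zero_map_eq_zero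
    (L ∘ₗ mulRightLinearMap n ℝ Wᵀ ∘ₗ mulLeftLinearMap _ ℝ W) (by simpa using h)
  obtain ⟨t, N, hN⟩ := exists_mul_transpose_eq_one_add_smul hS hS0
  refine ⟨W * N, ?_⟩
  have hWN : W * N * (W * N)ᵀ = W * Wᵀ + t • (W * S * Wᵀ) := by
    rw [transpose_mul, Matrix.mul_assoc W N, ← Matrix.mul_assoc N, hN, Matrix.add_mul,
      Matrix.one_mul, Matrix.smul_mul, Matrix.mul_add, Matrix.mul_smul, ← Matrix.mul_assoc]
  simp only [LinearMap.comp_apply, mulLeftLinearMap_apply, mulRightLinearMap_apply] at hLS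
  rw [hWN, map_add, map_smul, hLS, smul_zero, add_zero]

lemma rank_mul_transpose_le [Fintype n] {r : ℕ} (W : Matrix n (Fin r) ℝ) :
    (W * Wᵀ).rank ≤ r :=
  (rank_mul_le_left W Wᵀ).trans ((rank_le_card_width W).trans_eq (Fintype.card_fin r))

lemma posSemidef_mul_transpose_self [Finite n] {m : Type*} [Fintype m] (W : Matrix n m ℝ) :
    (W * Wᵀ).PosSemidef := by
  simpa using posSemidef_self_mul_conjTranspose W

lemma exists_posSemidef_map_eq_mul_transpose [Fintype n] (L : Matrix n n ℝ →ₗ[ℝ] M)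
    {r : ℕ} (W : Matrix n (Fin r) ℝ) :
    ∃ B : Matrix n n ℝ, B.PosSemidef ∧ L B = L (W * Wᵀ) ∧
      B.rank * (B.rank + 1) ≤ 2 * finrank ℝ M := by
  induction r with
  | zero =>
    refine ⟨W * Wᵀ, posSemidef_mul_transpose_self W, rfl, ?_⟩
    simp
  | succ k ih =>
    by_cases h : (k + 1) * (k + 2) ≤ 2 * finrank ℝ M
    · refine ⟨W * Wᵀ, posSemidef_mul_transpose_self W, rfl, le_trans ?_ h⟩
      exact Nat.mul_le_mul (rank_mul_transpose_le W) (Nat.succ_le_succ (rank_mul_transpose_le W))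
    · obtain ⟨W', hW'⟩ := exists_map_mul_transpose_eq_of_finrank_lt L W (not_le.mp h)
      obtain ⟨B, hB, hLB, hrank⟩ := ih W'
      exact ⟨B, hB, hLB.trans hW', hrank⟩

lemma PosSemidef.exists_eq_mul_transpose [Fintype n] {B : Matrix n n ℝ}
    (hB : B.PosSemidef) :
    ∃ W : Matrix n (Fin (Fintype.card n)) ℝ, B = W * Wᵀ := by
  classical
  open scoped MatrixOrder in
  obtain ⟨Y, rfl⟩ := CStarAlgebra.nonneg_iff_eq_star_mul_self.mp hB.nonneg
  refine ⟨Yᵀ.submatrix id (Fintype.equivFin n).symm, ?_⟩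
  rw [transpose_submatrix, submatrix_mul_equiv, submatrix_id_id, transpose_transpose]
  simp [star_eq_conjTranspose]

theorem PosSemidef.exists_posSemidef_map_eq_rank_mul_succ_le [Fintype n]
    (L : Matrix n n ℝ →ₗ[ℝ] M) {B : Matrix n n ℝ} (hB : B.PosSemidef) :
    ∃ B' : Matrix n n ℝ, B'.PosSemidef ∧ L B' = L B ∧
      B'.rank * (B'.rank + 1) ≤ 2 * finrank ℝ M := by
  obtain ⟨W, rfl⟩ := hB.exists_eq_mul_transpose
  exact exists_posSemidef_map_eq_mul_transpose L W

end Matrix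

lemma le_floor_sqrt_of_mul_succ_le {k m : ℕ} (h : k * (k + 1) ≤ 2 * m) :
    k ≤ ⌊(√(8 * m + 1) - 1) / 2⌋₊ := by
  have h' : ((k * (k + 1) : ℕ) : ℝ) ≤ ((2 * m : ℕ) : ℝ) := Nat.cast_le.mpr h
  push_cast at h'
  have hsqrt : 2 * (k : ℝ) + 1 ≤ √(8 * m + 1) := Real.le_sqrt_of_sq_le (by nlinarith)
  exact Nat.le_floor (by linarith)

namespace SimpleGraph

variable {V : Type*} (G : SimpleGraph V)

/-- On a Gram matrix `X = Y * Yᵀ` its value at `s(u, v)` is `‖Y u - Y v‖²`. -/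
def edgeSqDist : Matrix V V ℝ →ₗ[ℝ] (G.edgeSet → ℝ) where
  toFun X e := Sym2.lift ⟨fun u v => X u u + X v v - X u v - X v u, fun _ _ => by ring⟩ e
  map_add' X Y := by
    funext ⟨e, _⟩
    induction e with
    | _ u v => simp only [Sym2.lift_mk, Matrix.add_apply, Pi.add_apply]; ring
  map_smul' c X := by
    funext ⟨e, _⟩
    induction e with
    | _ u v =>
      simp only [Sym2.lift_mk, Matrix.smul_apply, Pi.smul_apply, smul_eq_mul, RingHom.id_apply]
      ring

lemma edgeSqDist_apply_of_isHermitian {X : Matrix V V ℝ} (hX : X.IsHermitian) {u v : V}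
    (huv : G.Adj u v) : G.edgeSqDist X ⟨s(u, v), huv⟩ = X u u + X v v - 2 * X u v := by
  have hvu : X v u = X u v := by simpa using hX.apply u v
  simp [edgeSqDist, hvu]
  ring

end SimpleGraph

theorem barvinok_low_rank_solution_general
    (V : Type*) [Fintype V] (G : SimpleGraph V)
    [DecidableRel G.Adj] (m : ℕ) (hm : m = G.edgeFinset.card)
    (d : V → V → ℝ)
    (B : Matrix V V ℝ) (hB : B.PosSemidef)
    (hfeas : ∀ u v, G.Adj u v → B u u + B v v - 2 * B u v = d u v ^ 2) :
    ∃ B' : Matrix V V ℝ, B'.PosSemidef ∧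
      (∀ u v, G.Adj u v → B' u u + B' v v - 2 * B' u v = d u v ^ 2) ∧
      B'.rank ≤ ⌊(Real.sqrt (8 * m + 1) - 1) / 2⌋₊ := by
  obtain ⟨B', hB', hdist, hrank⟩ := hB.exists_posSemidef_map_eq_rank_mul_succ_le G.edgeSqDist
  refine ⟨B', hB', fun u v huv => ?_, le_floor_sqrt_of_mul_succ_le ?_⟩
  · have huv_dist := congrFun hdist ⟨s(u, v), huv⟩
    rw [G.edgeSqDist_apply_of_isHermitian hB'.isHermitian huv,
      G.edgeSqDist_apply_of_isHermitian hB.isHermitian huv] at huv_dist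
    rw [huv_dist, hfeas u v huv]
  · rwa [hm, G.edgeFinset_card, ← finrank_fintype_fun_eq_card ℝ]

/-- Barvinok's theorem for the SDP formulation of the EDMCP: if the SDP with
`m = |E|` equality constraints is feasible, it has a feasible solution of rank at
most `⌊(√(8m+1) − 1)/2⌋`. -/
theorem barvinok_low_rank_solution
    (V : Type*) [Fintype V] [DecidableEq V] (G : SimpleGraph V)
    [DecidableRel G.Adj] (m : ℕ) (hm : m = G.edgeFinset.card)
    (d : V → V → ℝ) (hd : ∀ u v, 0 ≤ d u v)
    (B : Matrix V V ℝ) (hB : B.PosSemidef)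
    (hfeas : ∀ u v, G.Adj u v → B u u + B v v - 2 * B u v = d u v ^ 2) :
    ∃ B' : Matrix V V ℝ, B'.PosSemidef ∧
      (∀ u v, G.Adj u v → B' u u + B' v v - 2 * B' u v = d u v ^ 2) ∧
      B'.rank ≤ ⌊(Real.sqrt (8 * m + 1) - 1) / 2⌋₊ :=
  barvinok_low_rank_solution_general V G m hm d B hB hfeas
end

section
/- Let d : {0,1,2,3} × {0,1,2,3} → ℝ₊ be a symmetric weight function on the complete graph K₄ with zero diagonal. Suppose there exists a realization x : {0,1,2,3} → ℝ³ with ‖x_i − x_j‖ = d_{ij} for all i ≠ j, but no realization y : {0,1,2,3} → ℝ² with ‖y_i − y_j‖ = d_{ij} for all i ≠ j. Then there exist r > 0 and a realization z : {0,1,2,3} → ℝ³ with ‖z_i‖ = r for all i and ‖z_i − z_j‖ = d_{ij} for all i ≠ j, i.e., the four points can be realized on the surface of a sphere. -/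
open Submodule Module

/-- If four points in `ℝ³` are not affinely independent, their mutual distances can be
realized in `ℝ²`. -/
lemma planar_realization_of_not_affineIndependent
    (x : Fin 4 → EuclideanSpace ℝ (Fin 3)) (h : ¬ AffineIndependent ℝ x) :
    ∃ y : Fin 4 → EuclideanSpace ℝ (Fin 2),
      ∀ i j, ‖y i - y j‖ = ‖x i - x j‖ := by
  set v : {i : Fin 4 // i ≠ 0} → EuclideanSpace ℝ (Fin 3) := fun i => x i - x 0 with hv
  set S : Submodule ℝ (EuclideanSpace ℝ (Fin 3)) := span ℝ (Set.range v) with hS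
  have hli : ¬ LinearIndependent ℝ v := by
    intro hl
    exact h ((affineIndependent_iff_linearIndependent_vsub ℝ x 0).2 hl)
  have hcard : Fintype.card {i : Fin 4 // i ≠ 0} = 3 := by
    simp [Fintype.card_subtype_compl]
  have hfr : Set.finrank ℝ (Set.range v) ≤ 2 := by
    have hle := finrank_range_le_card (R := ℝ) v
    rw [hcard] at hle
    rcases lt_or_eq_of_le hle with h' | h'
    · omega
    · exact absurd (linearIndependent_iff_card_eq_finrank_span.2 (hcard.trans h'.symm)) hli
  -- find a nonzero vector orthogonal to S
  have hSfr : finrank ℝ S ≤ 2 := hfr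
  have hfrE : finrank ℝ (EuclideanSpace ℝ (Fin 3)) = 3 := by simp
  have horth : finrank ℝ Sᗮ ≥ 1 := by
    have := Submodule.finrank_add_finrank_orthogonal (K := S)
    omega
  obtain ⟨u, hu, hune⟩ : ∃ u ∈ Sᗮ, u ≠ 0 := by
    by_contra hcon
    push_neg at hcon
    have : Sᗮ = ⊥ := by
      ext w; simp only [mem_bot]
      exact ⟨fun hw => by by_contra hne; exact hne (hcon w hw), fun hw => hw ▸ zero_mem _⟩
    rw [this] at horth
    simp [finrank_bot] at horth
  set W : Submodule ℝ (EuclideanSpace ℝ (Fin 3)) := (ℝ ∙ u)ᗮ with hW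
  have hWfr : finrank ℝ W = 2 := by
    have h2' := Submodule.finrank_add_finrank_orthogonal (K := (ℝ ∙ u))
    rw [finrank_span_singleton hune, hfrE] at h2'
    rw [hW]
    omega
  have hSW : S ≤ W := by
    refine le_trans (Submodule.le_orthogonal_orthogonal S) ?_
    exact Submodule.orthogonal_le ((Submodule.span_singleton_le_iff_mem u _).2 hu)
  have hmem : ∀ j, x j - x 0 ∈ W := by
    intro j
    refine Fin.cases ?_ (fun i => ?_) j
    · simpa using W.zero_mem
    · exact hSW (subset_span ⟨⟨i.succ, Fin.succ_ne_zero i⟩, rfl⟩)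
  haveI : FiniteDimensional ℝ W := inferInstance
  let b : OrthonormalBasis (Fin 2) ℝ W :=
    (stdOrthonormalBasis ℝ W).reindex (finCongr hWfr)
  refine ⟨fun j => b.repr ⟨x j - x 0, hmem j⟩, fun i j => ?_⟩
  rw [← LinearIsometryEquiv.map_sub]
  rw [b.repr.norm_map]
  show ‖((⟨x i - x 0, hmem i⟩ - ⟨x j - x 0, hmem j⟩ : W) : EuclideanSpace ℝ (Fin 3))‖ = _
  congr 1
  push_cast
  abel

/-- Gödel's theorem: if a weighted complete graph on 4 vertices is realizable in
`ℝ³` but not in `ℝ²`, then it is realizable on the surface of a sphere. -/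
theorem goedel_sphere_realization
    (d : Fin 4 → Fin 4 → ℝ) (hd : ∀ i j, 0 ≤ d i j)
    (hsymm : ∀ i j, d i j = d j i) (hdiag : ∀ i, d i i = 0)
    (x : Fin 4 → EuclideanSpace ℝ (Fin 3))
    (hx : ∀ i j, i ≠ j → ‖x i - x j‖ = d i j)
    (h2 : ¬ ∃ y : Fin 4 → EuclideanSpace ℝ (Fin 2),
      ∀ i j, i ≠ j → ‖y i - y j‖ = d i j) :
    ∃ r > (0 : ℝ), ∃ z : Fin 4 → EuclideanSpace ℝ (Fin 3),
      (∀ i, ‖z i‖ = r) ∧ ∀ i j, i ≠ j → ‖z i - z j‖ = d i j := by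
  have hai : AffineIndependent ℝ x := by
    by_contra h
    obtain ⟨y, hy⟩ := planar_realization_of_not_affineIndependent x h
    exact h2 ⟨y, fun i j hij => (hy i j).trans (hx i j hij)⟩
  let s : Affine.Simplex ℝ (EuclideanSpace ℝ (Fin 3)) 3 := ⟨x, hai⟩
  refine ⟨s.circumradius, s.circumradius_pos, fun i => x i - s.circumcenter, fun i => ?_,
    fun i j hij => ?_⟩
  · have := s.dist_circumcenter_eq_circumradius i
    rw [dist_eq_norm] at this
    exact this
  · rw [show x i - s.circumcenter - (x j - s.circumcenter) = x i - x j by abel]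
    exact hx i j hij
end

section
/- There exists a constant C > 0 with the following property: for every ε ∈ (0,1), every m ≥ 1, every finite set Y ⊆ ℝ^m with |Y| ≥ 2, and every natural number K ≥ C·ε⁻²·ln|Y|, there exists a function f : ℝ^m → ℝ^K such that for all x, y ∈ Y, (1−ε)‖x−y‖₂ ≤ ‖f(x)−f(y)‖₂ ≤ (1+ε)‖x−y‖₂. -/
/-!
Project with a random matrix of signs `±1/√K`. For a unit vector `a`, each coordinate of the image
is `K^(-1/2)` times a Rademacher sum `X = ∑ⱼ ±aⱼ`, and `cosh x ≤ exp (x²/2)` gives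
`𝔼 exp (cX) ≤ exp (c²/2)`. Averaging the Gaussian identity
`exp (t y²) = (2π)^(-1/2) ∫ exp (-g²/2 + √(2t) y g) dg` turns this into
`𝔼 exp (tX²) ≤ (1 - 2t)^(-1/2)`, while `𝔼 X² = 1` and `𝔼 X⁴ ≤ 24` bound `𝔼 exp (-tX²)`.
The `K` rows are independent, so Chernoff's method shows that the squared norm of the image of a
fixed vector leaves the window `(1 ± ε)` times its original value for a proportion at most
`2 exp (-K ε²/96)` of the sign matrices. For `K ≥ 300 ε⁻² ln n` this is below `1/(2n²)`, and a
union bound over the pairs of points leaves a sign matrix that works for all of them.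
Probabilities are proportions `#{ω | …} / card Ω` of sign patterns, expectations are averages `𝔼`.
-/

open Real Finset MeasureTheory
open scoped BigOperators

lemma Fintype.card_filter_le_div_card_le_exp_neg_mul_expect_exp {Ω : Type*} [Fintype Ω]
    (F : Ω → ℝ) (s : ℝ) :
    (#{ω | s ≤ F ω} : ℝ) / Fintype.card Ω ≤ exp (-s) * 𝔼 ω, exp (F ω) := by
  rw [Fintype.expect_eq_sum_div_card, mul_div_assoc']
  gcongr
  calc (#{ω | s ≤ F ω} : ℝ) = ∑ ω with s ≤ F ω, 1 := by simp
    _ ≤ ∑ ω with s ≤ F ω, exp (-s) * exp (F ω) := by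
        gcongr with ω hω
        rw [← exp_add, one_le_exp_iff]
        linarith [(mem_filter.1 hω).2]
    _ ≤ ∑ ω, exp (-s) * exp (F ω) := sum_le_sum_of_subset_of_nonneg (filter_subset _ _)
        fun _ _ _ => by positivity
    _ = exp (-s) * ∑ ω, exp (F ω) := (mul_sum _ _ _).symm

lemma Fintype.expect_pi_prod {ι β 𝕜 : Type*} [Fintype ι] [DecidableEq ι] [Fintype β]
    [Semifield 𝕜] [CharZero 𝕜] (f : ι → β → 𝕜) :
    𝔼 ω : ι → β, ∏ i, f i (ω i) = ∏ i, 𝔼 b, f i b := by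
  simp only [Fintype.expect_eq_sum_div_card, Fintype.card_pi, Nat.cast_prod, ← Fintype.prod_sum,
    Finset.prod_div_distrib]

lemma MeasureTheory.integral_expect {Ω α : Type*} [MeasurableSpace Ω] {μ : Measure Ω} [Fintype α]
    {f : α → Ω → ℝ} (hf : ∀ x, Integrable (f x) μ) :
    ∫ g, 𝔼 x, f x g ∂μ = 𝔼 x, ∫ g, f x g ∂μ := by
  simp_rw [Fintype.expect_eq_sum_div_card]
  rw [integral_div, integral_finsetSum _ fun x _ => hf x]

lemma MeasureTheory.integrable_expect {Ω α : Type*} [MeasurableSpace Ω] {μ : Measure Ω} [Fintype α]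
    {f : α → Ω → ℝ} (hf : ∀ x, Integrable (f x) μ) : Integrable (fun g => 𝔼 x, f x g) μ := by
  simp_rw [Fintype.expect_eq_sum_div_card]
  exact (integrable_finsetSum _ fun x _ => hf x).div_const _

lemma exists_forall_not_of_sum_card_filter_div_card_lt {Ω P : Type*} [Fintype Ω] [Nonempty Ω]
    (s : Finset P) (bad : P → Ω → Prop) [∀ p, DecidablePred (bad p)]
    (h : ∑ p ∈ s, (#{ω | bad p ω} : ℝ) / Fintype.card Ω < 1) : ∃ ω, ∀ p ∈ s, ¬ bad p ω := by
  classical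
  by_contra! hbad
  have hcover : (univ : Finset Ω) ⊆ s.biUnion fun p => {ω | bad p ω} := fun ω _ => by
    obtain ⟨p, hp, hω⟩ := hbad ω
    exact mem_biUnion.2 ⟨p, hp, mem_filter.2 ⟨mem_univ _, hω⟩⟩
  have hcard : (Fintype.card Ω : ℝ) ≤ ∑ p ∈ s, (#{ω | bad p ω} : ℝ) := by
    exact_mod_cast (card_le_card hcover).trans card_biUnion_le
  rw [← sum_div, div_lt_one (by positivity)] at h
  linarith

lemma le_and_le_of_sq_mem_Ioo {a b ε : ℝ} (ha : 0 ≤ a) (hb : 0 ≤ b) (hε0 : 0 ≤ ε) (hε1 : ε ≤ 1)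
    (h : a ^ 2 ∈ Set.Ioo ((1 - ε) * b ^ 2) ((1 + ε) * b ^ 2)) :
    (1 - ε) * b ≤ a ∧ a ≤ (1 + ε) * b := by
  obtain ⟨hlo, hhi⟩ := h
  constructor
  · rw [← pow_le_pow_iff_left₀ (by nlinarith) ha two_ne_zero]
    nlinarith [sq_nonneg b]
  · rw [← pow_le_pow_iff_left₀ ha (by positivity) two_ne_zero]
    nlinarith [sq_nonneg b]

lemma pow_four_le_cosh (y : ℝ) : y ^ 4 ≤ 48 * cosh y := by
  have h1 : |y| ^ 4 / 24 ≤ exp |y| := by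
    simpa [Nat.factorial] using pow_div_factorial_le_exp _ (abs_nonneg y) 4
  have h2 : exp |y| ≤ 2 * cosh y := by
    rw [← cosh_abs, cosh_eq]
    linarith [exp_pos (-|y|)]
  have h3 : y ^ 4 = |y| ^ 4 := (Even.pow_abs ⟨2, rfl⟩ y).symm
  linarith

lemma exp_neg_le_one_sub_add_sq {y : ℝ} (hy : 0 ≤ y) : exp (-y) ≤ 1 - y + y ^ 2 := by
  have h : exp (-y) * (1 + y) ≤ 1 := by
    calc exp (-y) * (1 + y) ≤ exp (-y) * exp y := by gcongr; linarith [add_one_le_exp y]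
      _ = 1 := by rw [← exp_add]; simp
  nlinarith [exp_pos (-y)]

lemma inv_sqrt_one_sub_two_mul_le_exp {t : ℝ} (ht0 : 0 ≤ t) (ht : t ≤ 1 / 4) :
    (√(1 - 2 * t))⁻¹ ≤ exp (t + 2 * t ^ 2) := by
  have hpos : 0 < 1 - 2 * t := by linarith
  rw [inv_le_iff_one_le_mul₀ (sqrt_pos.2 hpos), ← sqrt_sq (exp_pos _).le, ← sqrt_mul (sq_nonneg _),
    one_le_sqrt, ← exp_nat_mul]
  push_cast
  have hz : (0 : ℝ) ≤ 2 * (t + 2 * t ^ 2) := by positivity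
  nlinarith [quadratic_le_exp_of_nonneg hz, sq_nonneg t, exp_pos (2 * (t + 2 * t ^ 2))]

lemma exp_neg_mul_sq_add_mul {b : ℝ} (hb : b ≠ 0) (c x : ℝ) :
    exp (-b * x ^ 2 + c * x) = exp (c ^ 2 / (4 * b)) * exp (-b * (x - c / (2 * b)) ^ 2) := by
  rw [← exp_add]
  congr 1
  field_simp
  ring

lemma integrable_exp_neg_mul_sq_add_mul {b : ℝ} (hb : 0 < b) (c : ℝ) :
    Integrable fun x : ℝ => exp (-b * x ^ 2 + c * x) := by
  simp_rw [exp_neg_mul_sq_add_mul hb.ne']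
  exact ((integrable_exp_neg_mul_sq hb).comp_sub_right _).const_mul _

lemma integral_exp_neg_mul_sq_add_mul {b : ℝ} (hb : 0 < b) (c : ℝ) :
    ∫ x : ℝ, exp (-b * x ^ 2 + c * x) = √(π / b) * exp (c ^ 2 / (4 * b)) := by
  simp_rw [exp_neg_mul_sq_add_mul hb.ne']
  rw [integral_const_mul, integral_sub_right_eq_self (fun x => exp (-b * x ^ 2)), integral_gaussian,
    mul_comm]

lemma exp_mul_sq_eq_integral {t : ℝ} (ht : 0 ≤ t) (y : ℝ) :
    exp (t * y ^ 2) = (√(2 * π))⁻¹ * ∫ g : ℝ, exp (-(1 / 2) * g ^ 2 + (√(2 * t) * y) * g) := by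
  rw [integral_exp_neg_mul_sq_add_mul one_half_pos, show π / (1 / 2) = 2 * π by ring,
    inv_mul_cancel_left₀ (by positivity), mul_pow, sq_sqrt (by positivity)]
  ring_nf

section SubGaussian

variable {α : Type*} [Fintype α] {X : α → ℝ}

lemma expect_pow_four_le_of_expect_exp_le (hX : ∀ c, 𝔼 x, exp (c * X x) ≤ exp (c ^ 2 / 2)) :
    𝔼 x, X x ^ 4 ≤ 24 := by
  have hcosh : 𝔼 x, cosh (2 * X x) ≤ exp 2 := by
    simp_rw [cosh_eq, ← expect_div, expect_add_distrib, ← neg_mul]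
    linarith [hX 2, hX (-2), show (2 : ℝ) ^ 2 / 2 = 2 by norm_num,
      show (-2 : ℝ) ^ 2 / 2 = 2 by norm_num]
  calc 𝔼 x, X x ^ 4 = 𝔼 x, (2 * X x) ^ 4 / 16 := by congr! 1 with x; ring
    _ ≤ 𝔼 x, 3 * cosh (2 * X x) := by gcongr with x; linarith [pow_four_le_cosh (2 * X x)]
    _ ≤ 3 * exp 2 := by rw [← mul_expect]; gcongr
    _ ≤ 24 := by
        have : exp 2 = exp 1 * exp 1 := by rw [← exp_add]; norm_num
        nlinarith [exp_one_lt_d9, exp_pos 1]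

lemma expect_exp_mul_sq_le_of_expect_exp_le (hX : ∀ c, 𝔼 x, exp (c * X x) ≤ exp (c ^ 2 / 2))
    {t : ℝ} (ht0 : 0 ≤ t) (ht : t < 1 / 2) :
    𝔼 x, exp (t * X x ^ 2) ≤ (√(1 - 2 * t))⁻¹ := by
  have hint x : Integrable fun g : ℝ => exp (-(1 / 2) * g ^ 2 + (√(2 * t) * X x) * g) :=
    integrable_exp_neg_mul_sq_add_mul one_half_pos _
  have hpointwise (g : ℝ) : 𝔼 x, exp (-(1 / 2) * g ^ 2 + (√(2 * t) * X x) * g)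
      ≤ exp (-(1 / 2 - t) * g ^ 2) := calc
    _ = exp (-(1 / 2) * g ^ 2) * 𝔼 x, exp ((√(2 * t) * g) * X x) := by
        rw [mul_expect]
        exact expect_congr rfl fun x _ => by rw [← exp_add]; ring_nf
    _ ≤ exp (-(1 / 2) * g ^ 2) * exp ((√(2 * t) * g) ^ 2 / 2) := by gcongr; exact hX _
    _ = exp (-(1 / 2 - t) * g ^ 2) := by
        rw [← exp_add, mul_pow, sq_sqrt (by positivity)]; ring_nf
  calc 𝔼 x, exp (t * X x ^ 2)
      = (√(2 * π))⁻¹ * ∫ g : ℝ, 𝔼 x, exp (-(1 / 2) * g ^ 2 + (√(2 * t) * X x) * g) := by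
        simp_rw [exp_mul_sq_eq_integral ht0, integral_expect hint, mul_expect]
    _ ≤ (√(2 * π))⁻¹ * ∫ g : ℝ, exp (-(1 / 2 - t) * g ^ 2) := by
        refine mul_le_mul_of_nonneg_left (integral_mono (integrable_expect hint)
          (integrable_exp_neg_mul_sq (by linarith)) hpointwise) (by positivity)
    _ = (√(1 - 2 * t))⁻¹ := by
        rw [integral_gaussian, show π / (1 / 2 - t) = 2 * π / (1 - 2 * t) by field_simp,
          sqrt_div' _ (by linarith), div_eq_mul_inv, inv_mul_cancel_left₀ (by positivity)]

lemma expect_exp_neg_mul_sq_le_of_moments (h2 : 𝔼 x, X x ^ 2 = 1) (h4 : 𝔼 x, X x ^ 4 ≤ 24)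
    {t : ℝ} (ht : 0 ≤ t) : 𝔼 x, exp (-t * X x ^ 2) ≤ exp (-t + 24 * t ^ 2) := by
  have : Nonempty α := by
    by_contra h
    simp [not_nonempty_iff.1 h] at h2
  calc 𝔼 x, exp (-t * X x ^ 2) ≤ 𝔼 x, (1 - t * X x ^ 2 + t ^ 2 * X x ^ 4) := by
        gcongr with x
        calc exp (-t * X x ^ 2) = exp (-(t * X x ^ 2)) := by ring_nf
          _ ≤ 1 - t * X x ^ 2 + (t * X x ^ 2) ^ 2 := exp_neg_le_one_sub_add_sq (by positivity)
          _ = 1 - t * X x ^ 2 + t ^ 2 * X x ^ 4 := by ring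
    _ = 1 - t * 𝔼 x, X x ^ 2 + t ^ 2 * 𝔼 x, X x ^ 4 := by
        rw [expect_add_distrib, expect_sub_distrib, Fintype.expect_const, mul_expect, mul_expect]
    _ ≤ 1 + (-t + 24 * t ^ 2) := by rw [h2]; nlinarith
    _ ≤ exp (-t + 24 * t ^ 2) := by linarith [add_one_le_exp (-t + 24 * t ^ 2)]

variable {K : ℕ}

lemma expect_exp_sum_comp (F : α → ℝ) :
    𝔼 ω : Fin K → α, exp (∑ i, F (ω i)) = (𝔼 x, exp (F x)) ^ K := by
  simp_rw [exp_sum]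
  rw [Fintype.expect_pi_prod fun _ x => exp (F x), prod_const, card_univ, Fintype.card_fin]

lemma card_filter_div_card_le_of_expect_exp_le (p : (Fin K → α) → Prop) [DecidablePred p]
    {F : α → ℝ} {s B : ℝ} (hp : ∀ ω, p ω → s ≤ ∑ i, F (ω i)) (hB : 𝔼 x, exp (F x) ≤ exp B) :
    (#{ω | p ω} : ℝ) / Fintype.card (Fin K → α) ≤ exp (K * B - s) := calc
  _ ≤ (#{ω : Fin K → α | s ≤ ∑ i, F (ω i)} : ℝ) / Fintype.card (Fin K → α) := by
      gcongr
      exact hp _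
  _ ≤ exp (-s) * 𝔼 ω : Fin K → α, exp (∑ i, F (ω i)) :=
      Fintype.card_filter_le_div_card_le_exp_neg_mul_expect_exp _ _
  _ ≤ exp (-s) * exp B ^ K := by
      rw [expect_exp_sum_comp]
      gcongr
  _ = exp (K * B - s) := by
      rw [← exp_nat_mul, ← exp_add]
      ring_nf

lemma card_filter_le_sum_sq_div_card_le (hX : ∀ c, 𝔼 x, exp (c * X x) ≤ exp (c ^ 2 / 2))
    {ε : ℝ} (hε0 : 0 ≤ ε) (hε1 : ε ≤ 1) :
    (#{ω : Fin K → α | K * (1 + ε) ≤ ∑ i, X (ω i) ^ 2} : ℝ) / Fintype.card (Fin K → α)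
      ≤ exp (-(K * ε ^ 2) / 8) := by
  -- Chernoff with `t = ε/4`: `K (t + 2t²) - t K (1 + ε) = -K ε²/8`.
  have hB : 𝔼 x, exp (ε / 4 * X x ^ 2) ≤ exp (ε / 4 + 2 * (ε / 4) ^ 2) :=
    (expect_exp_mul_sq_le_of_expect_exp_le hX (by positivity) (by linarith)).trans
      (inv_sqrt_one_sub_two_mul_le_exp (by positivity) (by linarith))
  refine (card_filter_div_card_le_of_expect_exp_le _ (s := ε / 4 * (K * (1 + ε)))
    (fun ω hω => ?_) hB).trans_eq (by ring_nf)
  rw [← mul_sum]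
  gcongr

lemma card_filter_sum_sq_le_div_card_le (h2 : 𝔼 x, X x ^ 2 = 1) (h4 : 𝔼 x, X x ^ 4 ≤ 24)
    {ε : ℝ} (hε0 : 0 ≤ ε) :
    (#{ω : Fin K → α | ∑ i, X (ω i) ^ 2 ≤ K * (1 - ε)} : ℝ) / Fintype.card (Fin K → α)
      ≤ exp (-(K * ε ^ 2) / 96) := by
  -- Chernoff with `-t`, `t = ε/48`: `K (-t + 24t²) + t K (1 - ε) = -K ε²/96`.
  refine (card_filter_div_card_le_of_expect_exp_le _ (s := -(ε / 48) * (K * (1 - ε)))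
    (fun ω hω => ?_)
    (expect_exp_neg_mul_sq_le_of_moments h2 h4 (t := ε / 48) (by positivity))).trans_eq (by ring_nf)
  rw [← mul_sum]
  exact mul_le_mul_of_nonpos_left hω (by linarith)

lemma card_filter_sum_sq_notMem_Ioo_div_card_le
    (hX : ∀ c, 𝔼 x, exp (c * X x) ≤ exp (c ^ 2 / 2)) (h2 : 𝔼 x, X x ^ 2 = 1)
    {ε : ℝ} (hε0 : 0 ≤ ε) (hε1 : ε ≤ 1) :
    (#{ω : Fin K → α | ∑ i, X (ω i) ^ 2 ∉ Set.Ioo (K * (1 - ε)) (K * (1 + ε))} : ℝ)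
      / Fintype.card (Fin K → α) ≤ 2 * exp (-(K * ε ^ 2) / 96) := by
  classical
  have hsub : #{ω : Fin K → α | ∑ i, X (ω i) ^ 2 ∉ Set.Ioo (K * (1 - ε)) (K * (1 + ε))}
      ≤ #{ω : Fin K → α | ∑ i, X (ω i) ^ 2 ≤ K * (1 - ε)}
        + #{ω : Fin K → α | K * (1 + ε) ≤ ∑ i, X (ω i) ^ 2} := by
    refine (card_le_card ?_).trans (card_union_le _ _)
    rw [← filter_or]
    refine monotone_filter_right _ fun ω _ h => ?_
    rwa [Set.mem_Ioo, not_and_or, not_lt, not_lt] at h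
  have hexp : exp (-(K * ε ^ 2) / 8) ≤ exp (-(K * ε ^ 2) / 96) := by
    rw [exp_le_exp]; linarith [show (0 : ℝ) ≤ K * ε ^ 2 by positivity]
  calc _ ≤ ((#{ω : Fin K → α | ∑ i, X (ω i) ^ 2 ≤ K * (1 - ε)} : ℝ)
        + #{ω : Fin K → α | K * (1 + ε) ≤ ∑ i, X (ω i) ^ 2}) / Fintype.card (Fin K → α) := by
        gcongr
        exact_mod_cast hsub
    _ ≤ _ := by
        rw [add_div]
        linarith [card_filter_sum_sq_le_div_card_le (K := K) h2
          (expect_pow_four_le_of_expect_exp_le hX) hε0,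
          card_filter_le_sum_sq_div_card_le (K := K) hX hε0 hε1]

end SubGaussian

def boolSign (b : Bool) : ℝ := if b then 1 else -1

@[simp] lemma boolSign_true : boolSign true = 1 := rfl
@[simp] lemma boolSign_false : boolSign false = -1 := rfl
@[simp] lemma boolSign_not (b : Bool) : boolSign (!b) = -boolSign b := by cases b <;> simp
@[simp] lemma boolSign_mul_self (b : Bool) : boolSign b * boolSign b = 1 := by cases b <;> simp

section Rademacher

variable {ι : Type*} [Fintype ι]

def rademacherSum (a : ι → ℝ) (w : ι → Bool) : ℝ := ∑ j, boolSign (w j) * a j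

lemma rademacherSum_smul (c : ℝ) (a : ι → ℝ) (w : ι → Bool) :
    rademacherSum (c • a) w = c * rademacherSum a w := by
  simp only [rademacherSum, Pi.smul_apply, smul_eq_mul, mul_sum]
  exact sum_congr rfl fun j _ => by ring

variable [DecidableEq ι]

lemma expect_exp_mul_rademacherSum (a : ι → ℝ) (c : ℝ) :
    𝔼 w, exp (c * rademacherSum a w) = ∏ j, cosh (c * a j) := by
  simp_rw [rademacherSum, mul_sum, exp_sum]
  rw [Fintype.expect_pi_prod (fun j b => exp (c * (boolSign b * a j)))]
  refine prod_congr rfl fun j _ => ?_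
  rw [Fintype.expect_eq_sum_div_card, Fintype.sum_bool, cosh_eq]
  simp

lemma expect_exp_mul_rademacherSum_le (a : ι → ℝ) (c : ℝ) :
    𝔼 w, exp (c * rademacherSum a w) ≤ exp (c ^ 2 * (∑ j, a j ^ 2) / 2) := by
  rw [expect_exp_mul_rademacherSum, mul_sum, sum_div, exp_sum]
  gcongr with j
  exact (cosh_le_exp_half_sq _).trans_eq (by ring_nf)

lemma expect_boolSign_mul_boolSign (j k : ι) :
    𝔼 w : ι → Bool, boolSign (w j) * boolSign (w k) = if j = k then 1 else 0 := by
  split_ifs with hjk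
  · simp [hjk]
  -- flipping the `j`-th sign is a bijection that negates the summand
  set flip : (ι → Bool) → (ι → Bool) := fun w => Function.update w j (!w j)
  have hflip : Function.Involutive flip := fun w => by simp [flip]
  have h := Fintype.expect_bijective flip hflip.bijective
    (fun w => -(boolSign (w j) * boolSign (w k))) (fun w => boolSign (w j) * boolSign (w k))
    fun w => by simp [flip, Function.update_of_ne (Ne.symm hjk)]
  rw [expect_neg_distrib] at h
  linarith

lemma expect_rademacherSum_sq (a : ι → ℝ) :
    𝔼 w, rademacherSum a w ^ 2 = ∑ j, a j ^ 2 := by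
  simp_rw [rademacherSum, sq, sum_mul_sum, expect_sum_comm]
  refine sum_congr rfl fun j _ => ?_
  simp_rw [mul_mul_mul_comm _ (a j), ← expect_mul, expect_boolSign_mul_boolSign, ite_mul, one_mul,
    zero_mul, sum_ite_eq]
  simp

end Rademacher

section SignMatrix

variable {ι : Type*} [Fintype ι] [DecidableEq ι] {K : ℕ}

noncomputable def signMatrix (ω : Fin K → ι → Bool) : Matrix (Fin K) ι ℝ :=
  Matrix.of fun i j => (√K)⁻¹ * boolSign (ω i j)

lemma toEuclideanLin_signMatrix_apply (ω : Fin K → ι → Bool) (v : EuclideanSpace ℝ ι)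
    (i : Fin K) : Matrix.toEuclideanLin (signMatrix ω) v i = (√K)⁻¹ * rademacherSum v (ω i) := by
  simp [Matrix.toLpLin_apply, signMatrix, Matrix.mulVec, dotProduct, rademacherSum, mul_sum,
    mul_assoc]

lemma norm_toEuclideanLin_signMatrix_sq (ω : Fin K → ι → Bool) (v : EuclideanSpace ℝ ι) :
    ‖Matrix.toEuclideanLin (signMatrix ω) v‖ ^ 2 = (∑ i, rademacherSum v (ω i) ^ 2) / K := by
  simp_rw [EuclideanSpace.real_norm_sq_eq, toEuclideanLin_signMatrix_apply, mul_pow, inv_pow,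
    sq_sqrt (Nat.cast_nonneg _), ← mul_sum, inv_mul_eq_div]

lemma card_filter_norm_sq_notMem_Ioo_div_card_le [NeZero K] {v : EuclideanSpace ℝ ι}
    (hv : v ≠ 0) {ε : ℝ} (hε0 : 0 ≤ ε) (hε1 : ε ≤ 1) :
    (#{ω : Fin K → ι → Bool | ‖Matrix.toEuclideanLin (signMatrix ω) v‖ ^ 2 ∉
        Set.Ioo ((1 - ε) * ‖v‖ ^ 2) ((1 + ε) * ‖v‖ ^ 2)} : ℝ) / Fintype.card (Fin K → ι → Bool)
      ≤ 2 * exp (-(K * ε ^ 2) / 96) := by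
  have hv' : 0 < ‖v‖ := norm_pos_iff.2 hv
  have hK : (0 : ℝ) < K := Nat.cast_pos.2 (NeZero.pos K)
  set a : ι → ℝ := ‖v‖⁻¹ • ⇑v
  have ha : ∑ j, a j ^ 2 = 1 := by
    simp only [a, Pi.smul_apply, smul_eq_mul, mul_pow, ← mul_sum,
      ← EuclideanSpace.real_norm_sq_eq]
    field_simp
  have hrad (w : ι → Bool) : rademacherSum v w = ‖v‖ * rademacherSum a w := by
    rw [← rademacherSum_smul, smul_inv_smul₀ hv'.ne']
  have hiff (ω : Fin K → ι → Bool) :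
      ‖Matrix.toEuclideanLin (signMatrix ω) v‖ ^ 2
          ∈ Set.Ioo ((1 - ε) * ‖v‖ ^ 2) ((1 + ε) * ‖v‖ ^ 2) ↔
        ∑ i, rademacherSum a (ω i) ^ 2 ∈ Set.Ioo (K * (1 - ε)) (K * (1 + ε)) := by
    simp only [norm_toEuclideanLin_signMatrix_sq, hrad, mul_pow, ← mul_sum, Set.mem_Ioo]
    rw [mul_div_assoc, mul_comm (1 - ε), mul_comm (1 + ε), mul_lt_mul_iff_right₀ (by positivity),
      mul_lt_mul_iff_right₀ (by positivity), lt_div_iff₀ hK, div_lt_iff₀ hK, mul_comm (1 - ε),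
      mul_comm (1 + ε)]
  simp_rw [hiff]
  exact card_filter_sum_sq_notMem_Ioo_div_card_le
    (fun c => (expect_exp_mul_rademacherSum_le a c).trans_eq (by rw [ha, mul_one]))
    ((expect_rademacherSum_sq a).trans ha) hε0 hε1

theorem exists_signMatrix_near_isometry [NeZero K] (Y : Finset (EuclideanSpace ℝ ι)) {ε : ℝ}
    (hε0 : 0 ≤ ε) (hε1 : ε ≤ 1) (hY : 2 * #Y.offDiag * exp (-(K * ε ^ 2) / 96) < 1) :
    ∃ ω : Fin K → ι → Bool, ∀ x ∈ Y, ∀ y ∈ Y,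
      (1 - ε) * ‖x - y‖ ≤ ‖Matrix.toEuclideanLin (signMatrix ω) x
          - Matrix.toEuclideanLin (signMatrix ω) y‖ ∧
        ‖Matrix.toEuclideanLin (signMatrix ω) x - Matrix.toEuclideanLin (signMatrix ω) y‖
          ≤ (1 + ε) * ‖x - y‖ := by
  obtain ⟨ω, hω⟩ := exists_forall_not_of_sum_card_filter_div_card_lt Y.offDiag
    (fun p ω => ‖Matrix.toEuclideanLin (signMatrix ω) (p.1 - p.2)‖ ^ 2 ∉
      Set.Ioo ((1 - ε) * ‖p.1 - p.2‖ ^ 2) ((1 + ε) * ‖p.1 - p.2‖ ^ 2)) <| calc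
    _ ≤ ∑ _p ∈ Y.offDiag, 2 * exp (-(K * ε ^ 2) / 96) := sum_le_sum fun p hp =>
        card_filter_norm_sq_notMem_Ioo_div_card_le (sub_ne_zero.2 (mem_offDiag.1 hp).2.2) hε0 hε1
    _ < 1 := by rw [sum_const, nsmul_eq_mul]; linarith
  refine ⟨ω, fun x hx y hy => ?_⟩
  rcases eq_or_ne x y with rfl | hxy
  · simp
  rw [← map_sub]
  exact le_and_le_of_sq_mem_Ioo (norm_nonneg _) (norm_nonneg _) hε0 hε1
    (not_not.1 (hω (x, y) (mem_offDiag.2 ⟨hx, hy, hxy⟩)))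

end SignMatrix

lemma two_mul_sq_mul_exp_neg_lt_one {n : ℕ} (hn : 2 ≤ n) {x : ℝ} (hx : 300 * log n ≤ x) :
    2 * n ^ 2 * exp (-x / 96) < 1 := by
  have hlog : 0 < log n := log_pos (by exact_mod_cast hn)
  have hlog2 : log 2 ≤ log n := log_le_log two_pos (by exact_mod_cast hn)
  have hlt : 2 * (n : ℝ) ^ 2 < exp (x / 96) := by
    rw [← exp_log (by positivity : 0 < 2 * (n : ℝ) ^ 2), exp_lt_exp,
      log_mul two_ne_zero (by positivity), log_pow]
    push_cast
    linarith
  rwa [neg_div, exp_neg, ← div_eq_mul_inv, div_lt_one (exp_pos _)]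

/-- The Johnson–Lindenstrauss lemma: pairwise Euclidean distances of a finite set
`Y ⊆ ℝ^m` can be preserved up to a factor `1 ± ε` in dimension `K = O(ε⁻² ln |Y|)`. -/
theorem johnson_lindenstrauss :
    ∃ C : ℝ, 0 < C ∧
      ∀ ε : ℝ, ε ∈ Set.Ioo (0 : ℝ) 1 → ∀ m : ℕ, 1 ≤ m →
        ∀ Y : Finset (EuclideanSpace ℝ (Fin m)), 2 ≤ Y.card →
          ∀ K : ℕ, C * ε⁻¹ ^ 2 * Real.log Y.card ≤ K →
            ∃ f : EuclideanSpace ℝ (Fin m) → EuclideanSpace ℝ (Fin K),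
              ∀ x ∈ Y, ∀ y ∈ Y,
                (1 - ε) * ‖x - y‖ ≤ ‖f x - f y‖ ∧
                ‖f x - f y‖ ≤ (1 + ε) * ‖x - y‖ := by
  refine ⟨300, by norm_num, ?_⟩
  rintro ε ⟨hε0, hε1⟩ m - Y hY K hK
  have hKε : 300 * log #Y ≤ K * ε ^ 2 := calc
    300 * log #Y = 300 * ε⁻¹ ^ 2 * log #Y * ε ^ 2 := by field_simp
    _ ≤ K * ε ^ 2 := by gcongr
  have : NeZero K := ⟨by
    rintro rfl
    have : 0 < log #Y := log_pos (by exact_mod_cast hY)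
    simp only [CharP.cast_eq_zero, zero_mul] at hKε
    linarith⟩
  have hpairs : (#Y.offDiag : ℝ) ≤ #Y ^ 2 := by
    rw [offDiag_card, sq]
    exact_mod_cast Nat.sub_le _ _
  obtain ⟨ω, hω⟩ := exists_signMatrix_near_isometry Y hε0.le hε1.le <|
    lt_of_le_of_lt (by gcongr) (two_mul_sq_mul_exp_neg_lt_one hY hKε)
  exact ⟨_, hω⟩
end
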